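/- arXiv:2207.08238 — 2 statements merged into one kernel-verified Lean document; each statement's English description precedes it below -/
import Mathlib

section
/- Let μ ∈ 𝔐_x(M) be a global Keisler measure and f : M^x → M^y an A-definable function. Then μ extension dominates the pushforward f(μ) over A, i.e., μ ≥_{E,A} f(μ). -/
open FirstOrder

/-- A Keisler measure over the parameter set `A`, in the variables indexed by `α`:
a finitely additive probability measure on the Boolean algebra of `A`-definable
subsets of `M^α` (i.e. on `L_α(A)`).  The function `toFun` is defined on all sets,
but only its values on `A`-definable sets are constrained (and relevant). -/
structure KeislerMeasure (L : FirstOrder.Language) (M : Type*) [L.Structure M]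
    (A : Set M) (α : Type*) where
  toFun : Set (α → M) → ℝ
  measure_univ : toFun Set.univ = 1
  nonneg' : ∀ s : Set (α → M), A.Definable L s → 0 ≤ toFun s
  compl' : ∀ s : Set (α → M), A.Definable L s → toFun sᶜ = 1 - toFun s
  union_inter' : ∀ s t : Set (α → M), A.Definable L s → A.Definable L t →
    toFun (s ∪ t) = toFun s + toFun t - toFun (s ∩ t)

/-- Pull back a set of variable assignments along a variable reindexing map:
for `S ⊆ M^α` and `f : α → β`, `cyl f S ⊆ M^β` is the corresponding cylinder.
E.g. `cyl Sum.inl X = X × M^β` inside `M^(α ⊕ β)`. -/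
def cyl {M : Type*} {α β : Type*} (f : α → β) (S : Set (α → M)) : Set (β → M) :=
  {g : β → M | (fun a => g (f a)) ∈ S}

/-- The product `X × Y` of a set in variables `α` and a set in variables `β`,
viewed inside the variables `α ⊕ β`. -/
def prodSet {M : Type*} {α β : Type*} (X : Set (α → M)) (Y : Set (β → M)) :
    Set (α ⊕ β → M) :=
  cyl Sum.inl X ∩ cyl Sum.inr Y

/-- The extension space `E(λ, μ)`: all global Keisler measures `ω` in the
variables `α ⊕ β` whose restriction to `A`-definable sets is `λ` and whose
marginal `π_α(ω)` is `μ`. -/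
def extSpace (L : FirstOrder.Language) {M : Type*} [L.Structure M] (A : Set M)
    {α β : Type*} (lam : KeislerMeasure L M A (α ⊕ β))
    (mu : KeislerMeasure L M (Set.univ : Set M) α) :
    Set (KeislerMeasure L M (Set.univ : Set M) (α ⊕ β)) :=
  {om | (∀ s : Set (α ⊕ β → M), A.Definable L s → om.toFun s = lam.toFun s) ∧
    (∀ X : Set (α → M), (Set.univ : Set M).Definable L X →
      om.toFun (cyl Sum.inl X) = mu.toFun X)}

/-- `μ` extension dominates `ν` over `A` (written `μ ≥_{E,A} ν`): there is
`λ ∈ 𝔐_{αβ}(A)` with `π_α(λ) = μ|_A` such that `π_β(ω) = ν` for every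
`ω ∈ E(λ, μ)`. -/
def ExtDomOver (L : FirstOrder.Language) {M : Type*} [L.Structure M] (A : Set M)
    {α β : Type*} (mu : KeislerMeasure L M (Set.univ : Set M) α)
    (nu : KeislerMeasure L M (Set.univ : Set M) β) : Prop :=
  ∃ lam : KeislerMeasure L M A (α ⊕ β),
    (∀ X : Set (α → M), A.Definable L X →
      lam.toFun (cyl Sum.inl X) = mu.toFun X) ∧
    ∀ om ∈ extSpace L A lam mu, ∀ Y : Set (β → M),
      (Set.univ : Set M).Definable L Y → om.toFun (cyl Sum.inr Y) = nu.toFun Y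

/-!
Let `Γ ⊆ M^(α ⊕ β)` be the graph of `f`. Take for `λ` the pushforward of `μ` along
`x ↦ (x, f x)`, restricted to `A`-definable sets; this needs the preimage of a definable set
under `x ↦ (x, f x)` to be definable, which holds because it is the projection of `S ∩ Γ` and,
as `Γ` is definable, `β` is finite (unless `M` is trivial). Every `ω ∈ E(λ, μ)` then gives
`Γ` measure `λ(Γ) = μ(M^α) = 1`, and the sets `M^α × Y` and `f⁻¹(Y) × M^β` agree on `Γ`, so
`ω(M^α × Y) = ω(f⁻¹(Y) × M^β) = μ(f⁻¹(Y)) = f(μ)(Y)`.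
-/

open Set

namespace FirstOrder.Language

theorem Formula.realize_iff_of_eqOn {L : Language} {M γ : Type*} [L.Structure M]
    [DecidableEq γ] (φ : L.Formula γ) {v w : γ → M} (h : EqOn v w φ.freeVarFinset) :
    φ.Realize v ↔ φ.Realize w :=
  (BoundedFormula.realize_restrictFreeVar (f := id) (v := fun a => v a) v fun _ => rfl).symm.trans
    (BoundedFormula.realize_restrictFreeVar w fun a => h a.2)

end FirstOrder.Language

section

variable {L : FirstOrder.Language} {M : Type*} [L.Structure M]

theorem Set.Definable.exists_finset_mem_iff_of_eqOn {B : Set M} {γ : Type*}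
    {s : Set (γ → M)} (hs : B.Definable L s) :
    ∃ F : Finset γ, ∀ v w : γ → M, EqOn v w F → (v ∈ s ↔ w ∈ s) := by
  classical
  obtain ⟨φ, rfl⟩ := hs
  exact ⟨φ.freeVarFinset, fun v w h => φ.realize_iff_of_eqOn h⟩

theorem Set.definable_of_subsingleton {B : Set M} {γ : Type*} [Subsingleton (γ → M)]
    (s : Set (γ → M)) : B.Definable L s := by
  rcases s.eq_empty_or_nonempty with rfl | hs
  · exact definable_empty
  · rw [hs.eq_univ]
    exact definable_univ

section Graph

variable {α β : Type*}

def sumGraph (f : (α → M) → (β → M)) : Set (α ⊕ β → M) :=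
  {g | (fun b => g (Sum.inr b)) = f (fun a => g (Sum.inl a))}

variable {f : (α → M) → (β → M)}

theorem sumElim_mem_sumGraph (x : α → M) : Sum.elim x (f x) ∈ sumGraph f := rfl

theorem sumElim_eq_of_mem_sumGraph {g : α ⊕ β → M} (hg : g ∈ sumGraph f) :
    Sum.elim (g ∘ Sum.inl) (f (g ∘ Sum.inl)) = g := by
  ext (a | b)
  · rfl
  · exact (congrFun hg b).symm

theorem preimage_sumElim_sumGraph : (fun x => Sum.elim x (f x)) ⁻¹' sumGraph f = univ :=
  eq_univ_of_forall sumElim_mem_sumGraph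

theorem cyl_inr_inter_sumGraph (Y : Set (β → M)) :
    cyl Sum.inr Y ∩ sumGraph f = cyl Sum.inl (f ⁻¹' Y) ∩ sumGraph f := by
  ext g
  simp only [mem_inter_iff, and_congr_left_iff]
  exact fun hg => Iff.of_eq (congrArg (· ∈ Y) hg)

theorem preimage_sumElim_eq (S : Set (α ⊕ β → M)) :
    (fun x => Sum.elim x (f x)) ⁻¹' S = {x | ∃ u, Sum.elim x u ∈ S ∩ sumGraph f} := by
  ext x
  constructor
  · exact fun hx => ⟨f x, hx, sumElim_mem_sumGraph x⟩
  · rintro ⟨u, hS, hΓ⟩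
    rwa [← sumElim_eq_of_mem_sumGraph hΓ] at hS

-- Off the free variables of a formula defining the graph, a point of the graph can be moved
-- freely; but the `β`-coordinates of a point of the graph are determined by its `α`-coordinates.
theorem finite_of_definable_sumGraph [Nontrivial M] {B : Set M}
    (hf : B.Definable L (sumGraph f)) : Finite β := by
  classical
  obtain ⟨F, hF⟩ := hf.exists_finset_mem_iff_of_eqOn
  have hmem : ∀ b, Sum.inr b ∈ F := by
    intro b
    by_contra hb
    let x : α → M := fun _ => Classical.arbitrary M
    obtain ⟨m, hm⟩ := exists_ne (f x b)
    let g := Function.update (Sum.elim x (f x)) (Sum.inr b) m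
    have hg : g ∈ sumGraph f := by
      refine (hF _ g fun i hi => ?_).1 (sumElim_mem_sumGraph x)
      exact (Function.update_of_ne (ne_of_mem_of_not_mem hi hb) _ _).symm
    have hgx : (fun a => g (Sum.inl a)) = x := by
      ext a
      exact Function.update_of_ne Sum.inl_ne_inr _ _
    have := congrFun hg b
    simp only [hgx, g, Function.update_self] at this
    exact hm this
  exact Finite.of_injective (fun b => (⟨Sum.inr b, hmem b⟩ : F))
    fun b b' h => Sum.inr_injective (congrArg Subtype.val h)

theorem Set.Definable.preimage_sumElim {B : Set M} (hf : B.Definable L (sumGraph f))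
    {S : Set (α ⊕ β → M)} (hS : B.Definable L S) :
    B.Definable L ((fun x => Sum.elim x (f x)) ⁻¹' S) := by
  rcases subsingleton_or_nontrivial M with hM | hM
  · exact definable_of_subsingleton _
  · have := finite_of_definable_sumGraph hf
    rw [preimage_sumElim_eq]
    exact (hS.inter hf).exists_of_finite

end Graph

namespace KeislerMeasure

variable {A : Set M} {γ : Type*} (m : KeislerMeasure L M A γ)

theorem toFun_empty : m.toFun ∅ = 0 := by
  have h := m.compl' univ definable_univ
  rw [compl_univ, m.measure_univ] at h
  linarith

theorem toFun_le_one {s : Set (γ → M)} (hs : A.Definable L s) : m.toFun s ≤ 1 := by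
  linarith [m.nonneg' sᶜ hs.compl, m.compl' s hs]

theorem toFun_mono {s t : Set (γ → M)} (hs : A.Definable L s) (ht : A.Definable L t)
    (hst : s ⊆ t) : m.toFun s ≤ m.toFun t := by
  have h := m.union_inter' s tᶜ hs ht.compl
  rw [← sdiff_eq, sdiff_eq_empty.mpr hst, m.toFun_empty] at h
  linarith [m.compl' t ht, m.toFun_le_one (hs.union ht.compl)]

theorem toFun_inter_of_toFun_eq_one {s t : Set (γ → M)} (hs : A.Definable L s)
    (ht : A.Definable L t) (h : m.toFun t = 1) : m.toFun (s ∩ t) = m.toFun s := by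
  linarith [m.toFun_mono (hs.inter ht) hs inter_subset_left, m.union_inter' s t hs ht,
    m.toFun_le_one (hs.union ht)]

theorem toFun_congr_of_inter_eq {s s' t : Set (γ → M)} (hs : A.Definable L s)
    (hs' : A.Definable L s') (ht : A.Definable L t) (h : m.toFun t = 1)
    (hst : s ∩ t = s' ∩ t) : m.toFun s = m.toFun s' := by
  rw [← m.toFun_inter_of_toFun_eq_one hs ht h, hst, m.toFun_inter_of_toFun_eq_one hs' ht h]

def map {A' : Set M} {δ : Type*} (e : (γ → M) → (δ → M))
    (he : ∀ s, A'.Definable L s → A.Definable L (e ⁻¹' s)) : KeislerMeasure L M A' δ where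
  toFun s := m.toFun (e ⁻¹' s)
  measure_univ := m.measure_univ
  nonneg' s hs := m.nonneg' _ (he s hs)
  compl' s hs := m.compl' _ (he s hs)
  union_inter' s t hs ht := m.union_inter' _ _ (he s hs) (he t ht)

end KeislerMeasure

end

/-- A global Keisler measure extension dominates its pushforwards: if
`f : M^α → M^β` is an `A`-definable function (its graph is an `A`-definable subset
of `M^(α⊕β)`) and `fmu` is the pushforward `f(μ)` (i.e. `fmu(Y) = μ(f⁻¹(Y))` for
every definable `Y`), then `μ ≥_{E,A} f(μ)`. -/
theorem extDom_pushforward {L : FirstOrder.Language} {M : Type*} [L.Structure M]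
    (A : Set M) {α β : Type*}
    (mu : KeislerMeasure L M (Set.univ : Set M) α)
    (f : (α → M) → (β → M))
    (hf : A.Definable L
      {g : α ⊕ β → M | (fun b => g (Sum.inr b)) = f (fun a => g (Sum.inl a))})
    (fmu : KeislerMeasure L M (Set.univ : Set M) β)
    (hfmu : ∀ Y : Set (β → M), (Set.univ : Set M).Definable L Y →
      fmu.toFun Y = mu.toFun (f ⁻¹' Y)) :
    ExtDomOver L A mu fmu := by
  have hΓ : (univ : Set M).Definable L (sumGraph f) := hf.mono (subset_univ A)
  have hpre {S} (hS : A.Definable L S) := hΓ.preimage_sumElim (hS.mono (subset_univ A))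
  refine ⟨mu.map _ fun _ => hpre, fun X _ => rfl, ?_⟩
  rintro om ⟨homA, homX⟩ Y hY
  have hΓ_one : om.toFun (sumGraph f) = 1 :=
    (homA _ hf).trans ((congrArg mu.toFun preimage_sumElim_sumGraph).trans mu.measure_univ)
  have hfY : (univ : Set M).Definable L (f ⁻¹' Y) :=
    hΓ.preimage_sumElim (hY.preimage_comp Sum.inr)
  calc om.toFun (cyl Sum.inr Y)
      = om.toFun (cyl Sum.inl (f ⁻¹' Y)) :=
        om.toFun_congr_of_inter_eq (hY.preimage_comp _) (hfY.preimage_comp _) hΓ hΓ_one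
          (cyl_inr_inter_sumGraph Y)
    _ = fmu.toFun Y := (homX _ hfY).trans (hfmu Y hY).symm
end

section
/- Let A ⊆ M, λ ∈ 𝔐_xyz(A), and ω ∈ 𝔐_xz(M) with ω|_A = π_xz(λ). Then there exists ω' ∈ 𝔐_xyz(M) such that π_xz(ω') = ω and ω'|_A = λ. -/
/-!
The extension is obtained by Hahn–Banach. On bounded functions of the variables `xyz` the
functional `g ↦ sup g` is sublinear. Prescribe the value `λ(S)` on the indicator of each
`A`-definable `S`, and `ω(T)` on the indicator of the cylinder over each `M`-definable `T`.
These prescriptions extend to a linear functional dominated by `sup`, that is, to a finitely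
additive probability, provided `∑ aᵢ λ(Sᵢ) + ∑ bⱼ ω(Tⱼ) ≤ c` whenever
`u + v ∘ π ≤ c` pointwise, where `u = ∑ aᵢ 1_{Sᵢ}` and `v = ∑ bⱼ 1_{Tⱼ}`.

For this, replace `u` by its fibrewise maximum `û(y) = max {u x | π x = y}`. It is a step
function whose steps are projections of Boolean combinations of the `Sᵢ`, hence `A`-definable.
So `∫ u dλ ≤ ∫ û ∘ π dλ = ∫ û dω`, and `∫ û dω + ∫ v dω ≤ c` because `û + v ≤ c`.
-/

open FirstOrder

open FirstOrder.Language Set Function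

namespace Set.Definable

variable {L : FirstOrder.Language} {M : Type*} [L.Structure M] {A : Set M} {α β : Type*}

theorem image_comp_sumInl {s : Set (α ⊕ β → M)} (h : A.Definable L s) :
    A.Definable L ((fun g : α ⊕ β → M => g ∘ Sum.inl) '' s) := by
  classical
  rcases isEmpty_or_nonempty (β → M) with hβ | ⟨⟨u₀⟩⟩
  · have : IsEmpty (α ⊕ β → M) := ⟨fun g => hβ.false (g ∘ Sum.inr)⟩
    rw [s.eq_empty_of_isEmpty, image_empty]
    exact definable_empty
  obtain ⟨φ, rfl⟩ := h
  -- `φ` mentions only finitely many of the `β`-variables: keep those and quantify them away.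
  let F := {b : β // Sum.inr b ∈ φ.freeVarFinset}
  let r : φ.freeVarFinset → α ⊕ F
    | ⟨.inl a, _⟩ => .inl a
    | ⟨.inr b, hb⟩ => .inr ⟨b, hb⟩
  have : Finite F := Finite.of_injective (fun b : F => (⟨_, b.2⟩ : φ.freeVarFinset))
    fun b b' hbb' => Subtype.ext (Sum.inr_injective (congrArg Subtype.val hbb'))
  convert (Definable.exists_of_finite (β := F) ⟨φ.restrictFreeVar r, rfl⟩) using 1
  ext v
  simp only [mem_image, mem_ofPred_eq, Formula.Realize]
  constructor
  · rintro ⟨x, hx, rfl⟩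
    refine ⟨fun b => x (.inr b.1), (BoundedFormula.realize_restrictFreeVar x ?_).2 hx⟩
    rintro ⟨a | b, ha⟩ <;> rfl
  · rintro ⟨u, hu⟩
    let x : α ⊕ β → M := Sum.elim v fun b => if hb : _ then u ⟨b, hb⟩ else u₀ b
    refine ⟨x, (BoundedFormula.realize_restrictFreeVar x ?_).1 hu, rfl⟩
    rintro ⟨a | b, ha⟩
    · rfl
    · simp [x, r, ha]

theorem image_comp_of_injective {s : Set (β → M)} (h : A.Definable L s) {f : α → β}
    (hf : Injective f) : A.Definable L ((fun g : β → M => g ∘ f) '' s) := by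
  classical
  refine (congr rfl (ext fun x => ?_)).mp
    ((h.image_comp_equiv (Equiv.Set.sumCompl (range f))).image_comp_equiv
      (Equiv.sumCongr (Equiv.ofInjective f hf) (Equiv.refl _))).image_comp_sumInl
  simp only [mem_image, exists_exists_and_eq_and]
  refine exists_congr fun y => and_congr_right fun _ => Eq.congr_left (funext fun a => ?_)
  simp

end Set.Definable

section Cells

variable {X ι : Type*} (U : ι → Set X)

def pattern (x : X) : Set ι := {i | x ∈ U i}

/-- For `K : Set ι`, the sets `cell U K` are the atoms of the Boolean algebra generated by `U`. -/
def cell (K : Set ι) : Set X := pattern U ⁻¹' {K}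

variable {U}

theorem mem_cell_pattern (x : X) : x ∈ cell U (pattern U x) := rfl

theorem sum_mul_indicator_eq_sum_indicator [Fintype ι] (a : ι → ℝ) (x : X) :
    ∑ i, a i * (U i).indicator 1 x = ∑ i, (pattern U x).indicator a i := by
  congr! 1 with i
  by_cases hx : x ∈ U i <;> simp [pattern, hx]

theorem sum_mul_indicator_cell [Fintype ι] (g : Set ι → ℝ) (x : X) :
    ∑ K, g K * (cell U K).indicator 1 x = g (pattern U x) := by
  classical
  simp [cell, indicator_apply]

theorem definable_cell {L : FirstOrder.Language} {M : Type*} [L.Structure M] {A : Set M}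
    {α : Type*} [Finite ι] {U : ι → Set (α → M)} (hU : ∀ i, A.Definable L (U i)) (K : Set ι) :
    A.Definable L (cell U K) := by
  classical
  have hcell : cell U K = ⋂ i, if i ∈ K then U i else (U i)ᶜ := by
    ext x
    simp only [cell, pattern, mem_preimage, mem_singleton_iff, Set.ext_iff, mem_ofPred_eq,
      mem_iInter]
    refine forall_congr' fun i => ?_
    split_ifs with hi <;> simp [hi]
  rw [hcell]
  refine definable_iInter_of_finite fun i => ?_
  split_ifs
  exacts [hU i, (hU i).compl]

end Cells

section HahnBanach

variable {X : Type*}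

variable (X) in
def boundedFunctions : Submodule ℝ (X → ℝ) where
  carrier := {g | ∃ C, ∀ x, |g x| ≤ C}
  add_mem' := by
    rintro g h ⟨C, hC⟩ ⟨D, hD⟩
    exact ⟨C + D, fun x => (abs_add_le _ _).trans (add_le_add (hC x) (hD x))⟩
  zero_mem' := ⟨0, fun x => by simp⟩
  smul_mem' := by
    rintro c g ⟨C, hC⟩
    exact ⟨|c| * C, fun x => by
      simpa [abs_mul] using mul_le_mul_of_nonneg_left (hC x) (abs_nonneg c)⟩

theorem bddAbove_range_of_mem_boundedFunctions {g : X → ℝ} (hg : g ∈ boundedFunctions X) :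
    BddAbove (range g) := by
  obtain ⟨C, hC⟩ := hg
  exact ⟨C, forall_mem_range.2 fun x => (le_abs_self _).trans (hC x)⟩

theorem indicator_one_mem_boundedFunctions (s : Set X) : s.indicator 1 ∈ boundedFunctions X :=
  ⟨1, fun x => by by_cases hx : x ∈ s <;> simp [hx]⟩

theorem exists_linear_le_iSup_of_graph {W : Submodule ℝ ((X → ℝ) × ℝ)}
    (hW : W ≤ (boundedFunctions X).comap (LinearMap.fst ℝ _ ℝ))
    (hle : ∀ p ∈ W, ∀ c, (∀ x, p.1 x ≤ c) → p.2 ≤ c) :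
    ∃ φ : boundedFunctions X →ₗ[ℝ] ℝ, (∀ g, φ g ≤ ⨆ x, (g : X → ℝ) x) ∧
      ∀ p (hp : p ∈ W), φ ⟨p.1, hW hp⟩ = p.2 := by
  let V := boundedFunctions X
  let W' : Submodule ℝ (V × ℝ) := W.comap (V.subtype.prodMap LinearMap.id)
  have hle' : ∀ q ∈ W', ∀ c, (∀ x, (q.1 : X → ℝ) x ≤ c) → q.2 ≤ c := fun q hq => hle _ hq
  have h_graph : ∀ q ∈ W', q.1 = 0 → q.2 = 0 := fun q hq hq0 =>
    le_antisymm (hle' q hq 0 (by simp [hq0]))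
      (neg_nonpos.1 (hle' (-q) (W'.neg_mem hq) 0 (by simp [hq0])))
  let N : V → ℝ := fun g => ⨆ x, (g : X → ℝ) x
  have N_hom : ∀ c : ℝ, 0 < c → ∀ g, N (c • g) = c * N g :=
    fun c hc g => (Real.mul_iSup_of_nonneg hc.le _).symm
  have N_add : ∀ g h, N (g + h) ≤ N g + N h := by
    intro g h
    rcases isEmpty_or_nonempty X with hX | hX
    · simp [N]
    · exact ciSup_le fun x => add_le_add
        (le_ciSup (bddAbove_range_of_mem_boundedFunctions g.2) x)
        (le_ciSup (bddAbove_range_of_mem_boundedFunctions h.2) x)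
  obtain ⟨φ, hφ_ext, hφ_le⟩ := exists_extension_of_le_sublinear W'.toLinearPMap N N_hom N_add
    fun g => hle' _ (W'.mem_graph_toLinearPMap h_graph g) _
      (le_ciSup (bddAbove_range_of_mem_boundedFunctions (g : V).2))
  refine ⟨φ, hφ_le, fun p hp => ?_⟩
  have hq : ((⟨p.1, hW hp⟩ : V), p.2) ∈ W' := hp
  have hdom : (⟨p.1, hW hp⟩ : V) ∈ W'.toLinearPMap.domain := ⟨_, hq, rfl⟩
  refine (hφ_ext ⟨_, hdom⟩).trans ?_
  exact (Submodule.existsUnique_from_graph (h_graph _) hdom).unique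
    (W'.mem_graph_toLinearPMap h_graph ⟨_, hdom⟩) hq

theorem exists_additive_of_graph {W : Submodule ℝ ((X → ℝ) × ℝ)}
    (hW : W ≤ (boundedFunctions X).comap (LinearMap.fst ℝ _ ℝ))
    (hle : ∀ p ∈ W, ∀ c, (∀ x, p.1 x ≤ c) → p.2 ≤ c) :
    ∃ ν : Set X → ℝ, (∀ s, 0 ≤ ν s) ∧ ν ∅ = 0 ∧ (∀ s t, ν (s ∪ t) + ν (s ∩ t) = ν s + ν t) ∧
      ∀ s r, (s.indicator 1, r) ∈ W → ν s = r := by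
  obtain ⟨φ, hφ_le, hφ_W⟩ := exists_linear_le_iSup_of_graph hW hle
  let χ : Set X → boundedFunctions X :=
    fun s => ⟨s.indicator 1, indicator_one_mem_boundedFunctions s⟩
  refine ⟨fun s => φ (χ s), fun s => ?_, ?_, fun s t => ?_, fun s r hsr => hφ_W _ hsr⟩
  · have h_neg : ⨆ x, ((-χ s : boundedFunctions X) : X → ℝ) x ≤ 0 :=
      Real.iSup_nonpos fun x => by by_cases hx : x ∈ s <;> simp [χ, hx]
    have := (hφ_le (-χ s)).trans h_neg
    rw [map_neg] at this
    exact neg_nonpos.1 this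
  · change φ (χ ∅) = 0
    rw [show χ ∅ = 0 from Subtype.ext (indicator_empty _), map_zero]
  · rw [← map_add, ← map_add]
    congr 1
    exact Subtype.ext (funext (indicator_union_add_inter_apply _ s t))

end HahnBanach

namespace KeislerMeasure

variable {L : FirstOrder.Language} {M : Type*} [L.Structure M] {A : Set M} {ι : Type*}
  (μ : KeislerMeasure L M A ι)

theorem toFun_empty_s8 : μ.toFun ∅ = 0 := by
  have h := μ.compl' univ definable_univ
  rw [compl_univ, μ.measure_univ] at h
  simpa using h

theorem nonempty (μ : KeislerMeasure L M A ι) : Nonempty (ι → M) := by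
  by_contra h
  have := μ.measure_univ
  rw [univ_eq_empty_iff.2 (not_nonempty_iff.1 h), toFun_empty_s8] at this
  exact zero_ne_one this

theorem toFun_union {s t : Set (ι → M)} (hs : A.Definable L s) (ht : A.Definable L t)
    (hst : Disjoint s t) : μ.toFun (s ∪ t) = μ.toFun s + μ.toFun t := by
  rw [μ.union_inter' s t hs ht, hst.inter_eq, toFun_empty_s8, sub_zero]

theorem toFun_biUnion_finset {κ : Type*} {s : Finset κ} {V : κ → Set (ι → M)}
    (hV : ∀ k, A.Definable L (V k)) (hd : (s : Set κ).PairwiseDisjoint V) :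
    μ.toFun (⋃ k ∈ s, V k) = ∑ k ∈ s, μ.toFun (V k) := by
  classical
  induction s using Finset.induction_on with
  | empty => simp [toFun_empty_s8]
  | insert k s hk ih =>
    rw [Finset.coe_insert] at hd
    rw [Finset.set_biUnion_insert, Finset.sum_insert hk,
      μ.toFun_union (hV k) (definable_biUnion_finset hV s), ih (hd.subset (subset_insert k _))]
    exact disjoint_iUnion₂_right.2 fun j hj =>
      hd (mem_insert k _) (mem_insert_of_mem k hj) (ne_of_mem_of_not_mem hj hk).symm

section Cells

variable {κ : Type*} [Fintype κ] {U : κ → Set (ι → M)}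

theorem toFun_eq_sum_cell (hU : ∀ k, A.Definable L (U k)) {V : Set (ι → M)}
    (hV : A.Definable L V) : μ.toFun V = ∑ K, μ.toFun (V ∩ cell U K) := by
  have hV_eq : V = ⋃ K ∈ (Finset.univ : Finset (Set κ)), V ∩ cell U K := by
    ext x
    simp [cell]
  conv_lhs => rw [hV_eq]
  exact μ.toFun_biUnion_finset (fun K => hV.inter (definable_cell hU K))
    ((pairwiseDisjoint_fiber (pattern U) _).mono fun K => inter_subset_right)

theorem sum_mul_toFun_eq_sum_cell (hU : ∀ k, A.Definable L (U k)) (a : κ → ℝ) :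
    ∑ k, a k * μ.toFun (U k) = ∑ K, (∑ k, K.indicator a k) * μ.toFun (cell U K) := by
  calc ∑ k, a k * μ.toFun (U k) = ∑ k, ∑ K, K.indicator a k * μ.toFun (cell U K) := by
        refine Finset.sum_congr rfl fun k _ => ?_
        rw [μ.toFun_eq_sum_cell hU (hU k), Finset.mul_sum]
        refine Finset.sum_congr rfl fun K _ => ?_
        by_cases hk : k ∈ K
        · have : cell U K ⊆ U k := fun x (hx : pattern U x = K) => show k ∈ pattern U x from hx ▸ hk
          rw [indicator_of_mem hk, inter_eq_right.2 this]
        · have : U k ∩ cell U K = ∅ :=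
            eq_empty_of_forall_notMem fun x ⟨hxk, (hx : pattern U x = K)⟩ => hk (hx ▸ hxk)
          rw [indicator_of_notMem hk, zero_mul, this, toFun_empty_s8, mul_zero]
    _ = ∑ K, (∑ k, K.indicator a k) * μ.toFun (cell U K) := by
        rw [Finset.sum_comm]
        simp only [Finset.sum_mul]

theorem sum_mul_le_of_forall_le (hU : ∀ k, A.Definable L (U k)) (a : κ → ℝ) {c : ℝ}
    (hc : ∀ x, ∑ k, a k * (U k).indicator 1 x ≤ c) : ∑ k, a k * μ.toFun (U k) ≤ c := by
  rw [μ.sum_mul_toFun_eq_sum_cell hU]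
  calc ∑ K, (∑ k, K.indicator a k) * μ.toFun (cell U K)
      ≤ ∑ K, c * μ.toFun (cell U K) := by
        refine Finset.sum_le_sum fun K _ => ?_
        rcases (cell U K).eq_empty_or_nonempty with hK | ⟨x, hx⟩
        · simp [hK, toFun_empty_s8]
        · refine mul_le_mul_of_nonneg_right ?_ (μ.nonneg' _ (definable_cell hU K))
          rw [← (hx : pattern U x = K), ← sum_mul_indicator_eq_sum_indicator]
          exact hc x
    _ = c := by
        have h_total := μ.toFun_eq_sum_cell hU definable_univ
        simp only [univ_inter, μ.measure_univ] at h_total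
        rw [← Finset.mul_sum, ← h_total, mul_one]

theorem sum_mul_add_sum_mul_le_of_forall_le {κ' : Type*} [Fintype κ'] {V : κ' → Set (ι → M)}
    (hU : ∀ k, A.Definable L (U k)) (hV : ∀ k, A.Definable L (V k)) (a : κ → ℝ) (b : κ' → ℝ)
    {c : ℝ} (hc : ∀ x, ∑ k, a k * (U k).indicator 1 x + ∑ k, b k * (V k).indicator 1 x ≤ c) :
    ∑ k, a k * μ.toFun (U k) + ∑ k, b k * μ.toFun (V k) ≤ c := by
  simpa using μ.sum_mul_le_of_forall_le (U := Sum.elim U V) (Sum.rec hU hV) (Sum.elim a b)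
    (by simpa using hc)

end Cells

variable {B : Set M} {κ : Type*}

theorem sum_mul_add_sum_mul_le_of_marginal_eq {ι' κ' : Type*} [Fintype ι'] [Fintype κ']
    (hAB : A ⊆ B) {f : κ → ι} (hf : Injective f)
    (lam : KeislerMeasure L M A ι) (om : KeislerMeasure L M B κ)
    (h : ∀ S, A.Definable L S → om.toFun S = lam.toFun (cyl f S))
    {S : ι' → Set (ι → M)} {T : κ' → Set (κ → M)}
    (hS : ∀ i, A.Definable L (S i)) (hT : ∀ j, B.Definable L (T j)) (a : ι' → ℝ) (b : κ' → ℝ)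
    {c : ℝ} (hc : ∀ x, ∑ i, a i * (S i).indicator 1 x + ∑ j, b j * (T j).indicator 1 (x ∘ f) ≤ c) :
    ∑ i, a i * lam.toFun (S i) + ∑ j, b j * om.toFun (T j) ≤ c := by
  classical
  let u : Set ι' → ℝ := fun K => ∑ i, K.indicator a i
  let D : Set ι' → Set (κ → M) := fun K => (· ∘ f) '' cell S K
  have hD : ∀ K, A.Definable L (D K) := fun K =>
    (definable_cell hS K).image_comp_of_injective hf
  -- `m (pattern D y)` is the maximum of `u ∘ pattern S` on the fibre of `(· ∘ f)` above `y`.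
  let m : Set (Set ι') → ℝ := fun 𝒦 => ⨆ K : 𝒦, u K
  have hu : ∀ x, ∑ i, a i * (S i).indicator 1 x = u (pattern S x) :=
    sum_mul_indicator_eq_sum_indicator a
  have h_lift : ∀ x, pattern S x ∈ pattern D (x ∘ f) := fun x => ⟨x, mem_cell_pattern x, rfl⟩
  have h_le : ∀ x, u (pattern S x) ≤ m (pattern D (x ∘ f)) := fun x =>
    le_ciSup (f := fun K : pattern D (x ∘ f) => u K) (Finite.bddAbove_range _) ⟨_, h_lift x⟩
  have h_max : ∀ y, m (pattern D y) + ∑ j, b j * (T j).indicator 1 y ≤ c := by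
    intro y
    obtain ⟨x₀⟩ := lam.nonempty
    obtain ⟨x, rfl⟩ : ∃ x, x ∘ f = y := ⟨extend f y x₀, funext (hf.extend_apply y x₀)⟩
    have : Nonempty (pattern D (x ∘ f)) := ⟨⟨_, h_lift x⟩⟩
    obtain ⟨⟨K, x', hx', hx'f⟩, hK⟩ :=
      exists_eq_ciSup_of_finite (f := fun K : pattern D (x ∘ f) => u K)
    have hx'c := hc x'
    rw [hu, (hx' : pattern S x' = K), show x' ∘ f = x ∘ f from hx'f] at hx'c
    rwa [hK] at hx'c
  have h_lam : ∑ i, a i * lam.toFun (S i) ≤ ∑ 𝒦, m 𝒦 * om.toFun (cell D 𝒦) := by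
    have h_cyl : ∀ x, ∑ 𝒦, m 𝒦 * (cyl f (cell D 𝒦)).indicator 1 x = m (pattern D (x ∘ f)) :=
      fun x => sum_mul_indicator_cell m (x ∘ f)
    have := lam.sum_mul_add_sum_mul_le_of_forall_le (V := fun 𝒦 => cyl f (cell D 𝒦)) hS
      (fun 𝒦 => (definable_cell hD 𝒦).preimage_comp f) a (-m) (c := 0) fun x => by
        simp only [Pi.neg_apply, neg_mul, Finset.sum_neg_distrib, h_cyl, hu]
        linarith [h_le x]
    simp only [Pi.neg_apply, neg_mul, Finset.sum_neg_distrib, ← h _ (definable_cell hD _)] at this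
    linarith
  have h_om : ∑ 𝒦, m 𝒦 * om.toFun (cell D 𝒦) + ∑ j, b j * om.toFun (T j) ≤ c :=
    om.sum_mul_add_sum_mul_le_of_forall_le (fun 𝒦 => (definable_cell hD 𝒦).mono hAB) hT m b
      fun y => by rw [sum_mul_indicator_cell]; exact h_max y
  linarith

theorem exists_additive_of_marginal_eq (hAB : A ⊆ B) {f : κ → ι} (hf : Injective f)
    (lam : KeislerMeasure L M A ι) (om : KeislerMeasure L M B κ)
    (h : ∀ S, A.Definable L S → om.toFun S = lam.toFun (cyl f S)) :
    ∃ ν : Set (ι → M) → ℝ, (∀ s, 0 ≤ ν s) ∧ ν ∅ = 0 ∧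
      (∀ s t, ν (s ∪ t) + ν (s ∩ t) = ν s + ν t) ∧
      (∀ S, A.Definable L S → ν S = lam.toFun S) ∧
      ∀ T, B.Definable L T → ν (cyl f T) = om.toFun T := by
  let G_lam : Set (((ι → M) → ℝ) × ℝ) :=
    (fun S => (S.indicator 1, lam.toFun S)) '' {S | A.Definable L S}
  let G_om : Set (((ι → M) → ℝ) × ℝ) :=
    (fun T => ((cyl f T).indicator 1, om.toFun T)) '' {T | B.Definable L T}
  let W := Submodule.span ℝ G_lam ⊔ Submodule.span ℝ G_om
  have hW : W ≤ (boundedFunctions _).comap (LinearMap.fst ℝ _ ℝ) := sup_le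
    (Submodule.span_le.2 (by rintro _ ⟨S, -, rfl⟩; exact indicator_one_mem_boundedFunctions _))
    (Submodule.span_le.2 (by rintro _ ⟨T, -, rfl⟩; exact indicator_one_mem_boundedFunctions _))
  have hle : ∀ p ∈ W, ∀ c, (∀ x, p.1 x ≤ c) → p.2 ≤ c := by
    intro p hp c hc
    obtain ⟨p_lam, hp_lam, p_om, hp_om, rfl⟩ := Submodule.mem_sup.1 hp
    obtain ⟨n, a, g, rfl⟩ := Submodule.mem_span_set'.1 hp_lam
    obtain ⟨m, b, g', rfl⟩ := Submodule.mem_span_set'.1 hp_om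
    choose S hS hSg using fun i => (g i).2
    choose T hT hTg using fun j => (g' j).2
    simp only [← hSg, ← hTg, Prod.fst_add, Prod.snd_add, Prod.fst_sum, Prod.snd_sum, Prod.smul_fst,
      Prod.smul_snd, Pi.add_apply, Finset.sum_apply, Pi.smul_apply, smul_eq_mul] at hc ⊢
    exact sum_mul_add_sum_mul_le_of_marginal_eq hAB hf lam om h hS hT a b hc
  obtain ⟨ν, hν_nonneg, hν_empty, hν_add, hν_W⟩ := exists_additive_of_graph hW hle
  exact ⟨ν, hν_nonneg, hν_empty, hν_add,
    fun S hS => hν_W _ _ (Submodule.mem_sup_left (Submodule.subset_span ⟨S, hS, rfl⟩)),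
    fun T hT => hν_W _ _ (Submodule.mem_sup_right (Submodule.subset_span ⟨T, hT, rfl⟩))⟩

end KeislerMeasure

/-- If `λ ∈ 𝔐_{αβγ}(A)`, `ω ∈ 𝔐_{αγ}(M)` and `ω|_A = π_{αγ}(λ)`, then there is a global
measure `ω' ∈ 𝔐_{αβγ}(M)` with `π_{αγ}(ω') = ω` and `ω'|_A = λ`. -/
theorem exists_extension_with_marginal {L : FirstOrder.Language} {M : Type*}
    [L.Structure M] (A : Set M) {α β γ : Type*}
    (lam : KeislerMeasure L M A (α ⊕ (β ⊕ γ)))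
    (om : KeislerMeasure L M (Set.univ : Set M) (α ⊕ γ))
    (h : ∀ S : Set (α ⊕ γ → M), A.Definable L S →
      om.toFun S = lam.toFun (cyl (Sum.map id Sum.inr) S)) :
    ∃ om' : KeislerMeasure L M (Set.univ : Set M) (α ⊕ (β ⊕ γ)),
      (∀ S : Set (α ⊕ γ → M), (Set.univ : Set M).Definable L S →
        om'.toFun (cyl (Sum.map id Sum.inr) S) = om.toFun S) ∧
      (∀ S : Set (α ⊕ (β ⊕ γ) → M), A.Definable L S →
        om'.toFun S = lam.toFun S) := by
  obtain ⟨ν, hν_nonneg, hν_empty, hν_add, hν_lam, hν_om⟩ :=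
    KeislerMeasure.exists_additive_of_marginal_eq (subset_univ A)
      (injective_id.sumMap Sum.inr_injective) lam om h
  have hν_univ : ν univ = 1 := (hν_om univ definable_univ).trans om.measure_univ
  refine ⟨⟨ν, hν_univ, fun s _ => hν_nonneg s, fun s _ => ?_, fun s t _ _ => ?_⟩, hν_om, hν_lam⟩
  · have := hν_add s sᶜ
    rw [union_compl_self, inter_compl_self, hν_univ, hν_empty] at this
    linarith
  · linarith [hν_add s t]
end
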